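/- A column C over C_n is KN-admissible if and only if it can be split, i.e., writing I = {z_1 > z_2 > ... > z_r} for the set of unbarred letters z such that both z and z̄ occur in C, there exists a set J = {t_1 > ... > t_r} of unbarred letters with: t_1 is the greatest letter of C_n with t_1 < z_1, t_1 ∉ C and t̄_1 ∉ C; and for i = 2,...,r, t_i is the greatest letter with t_i < min(t_{i-1}, z_i), t_i ∉ C and t̄_i ∉ C. -/

import Mathlib

/-! Letters of `C_n = {1 < ... < n < n̄ < ... < 1̄}` are encoded as natural
numbers in `[1, 2n]`: the unbarred letter `m` is `m` and the barred letter
`m̄` is `2n+1-m`. -/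

/-- A column over `C_n`: a strictly increasing list of letters of `C_n`. -/
def IsColumn (n : ℕ) (C : List ℕ) : Prop :=
  C.Chain' (· < ·) ∧ ∀ x ∈ C, 1 ≤ x ∧ x ≤ 2*n

/-- `N(m)`: the number of entries `x` of `C` with `x ≤ m` or `x ≥ m̄`. -/
def Ncount (n m : ℕ) (C : List ℕ) : ℕ :=
  (C.filter (fun x => decide (x ≤ m ∨ 2*n+1-m ≤ x))).length

/-- KN-admissibility via the counting condition `N(m) ≤ m` for all `m ≤ n`. -/
def KNAdmissible (n : ℕ) (C : List ℕ) : Prop :=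
  ∀ m, 1 ≤ m → m ≤ n → Ncount n m C ≤ m

/-- KN-coadmissibility: for each pair `(z, z̄)` occurring in the column,
the number of entries `x` with `z ≤ x ≤ z̄` is at most `n - z + 1`. -/
def Coadmissible (n : ℕ) (C : List ℕ) : Prop :=
  ∀ z, 1 ≤ z → z ≤ n → z ∈ C → (2*n+1-z) ∈ C →
    (C.filter (fun x => decide (z ≤ x ∧ x ≤ 2*n+1-z))).length ≤ n - z + 1

/-- The set `I = {z_1 > z_2 > ...}` of unbarred letters `z` such that both
`z` and `z̄` occur in `C`, listed in decreasing order. -/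
def dupList (n : ℕ) (C : List ℕ) : List ℕ :=
  ((List.range (n+1)).filter (fun z => decide (1 ≤ z ∧ z ∈ C ∧ (2*n+1-z) ∈ C))).reverse

/-- `t` is an unbarred letter `< bound` such that neither `t` nor `t̄` occurs in `C`. -/
def FreeLt (n : ℕ) (C : List ℕ) (bound t : ℕ) : Prop :=
  1 ≤ t ∧ t < bound ∧ t ∉ C ∧ (2*n+1-t) ∉ C

/-- `J = {t_1 > ... > t_r}` is the splitting set of `C`: `t_1` is the greatest
letter `< z_1` free in `C`, and `t_i` is the greatest letter `< min(t_{i-1}, z_i)`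
free in `C`. -/
def IsSplittingSet (n : ℕ) (C J : List ℕ) : Prop :=
  J.length = (dupList n C).length ∧
  ∀ i < J.length,
    FreeLt n C (if i = 0 then (dupList n C).getD 0 0
                else min (J.getD (i-1) 0) ((dupList n C).getD i 0)) (J.getD i 0) ∧
    ∀ s, FreeLt n C (if i = 0 then (dupList n C).getD 0 0
                else min (J.getD (i-1) 0) ((dupList n C).getD i 0)) s → s ≤ J.getD i 0

/-- `C` can be split. -/
def CanSplit (n : ℕ) (C : List ℕ) : Prop := ∃ J, IsSplittingSet n C J

/-- `lC`: replace each duplicated unbarred letter `z_i` by `t_i` and reorder. -/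
def lCol (n : ℕ) (C I J : List ℕ) : List ℕ :=
  List.insertionSort (· ≤ ·)
    (C.map fun x => if x ∈ I ∧ x ≤ n then J.getD (I.idxOf x) x else x)

/-- `rC`: replace each duplicated barred letter `z̄_i` by `t̄_i` and reorder. -/
def rCol (n : ℕ) (C I J : List ℕ) : List ℕ :=
  List.insertionSort (· ≤ ·)
    (C.map fun x => if (2*n+1-x) ∈ I ∧ n < x then 2*n+1 - J.getD (I.idxOf (2*n+1-x)) (2*n+1-x) else x)

/-- `C*`: the column made of the unbarred letters of `lC` followed by the
barred letters of `rC`. -/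
def starCol (n : ℕ) (C I J : List ℕ) : List ℕ :=
  (lCol n C I J).filter (fun x => decide (x ≤ n)) ++
  (rCol n C I J).filter (fun x => decide (n < x))

open Classical in
noncomputable def theSplit (n : ℕ) (C : List ℕ) : List ℕ :=
  if h : CanSplit n C then h.choose else []

noncomputable def lC (n : ℕ) (C : List ℕ) : List ℕ := lCol n C (dupList n C) (theSplit n C)
noncomputable def rC (n : ℕ) (C : List ℕ) : List ℕ := rCol n C (dupList n C) (theSplit n C)

/-- The map `Φ : C ↦ C*` from admissible to coadmissible columns. -/
noncomputable def PhiMap (n : ℕ) (C : List ℕ) : List ℕ :=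
  starCol n C (dupList n C) (theSplit n C)

/-- `w` is a non-admissible column word all of whose strict factors are admissible. -/
def MinimalNonAdm (n : ℕ) (w : List ℕ) : Prop :=
  IsColumn n w ∧ ¬ KNAdmissible n w ∧
  ∀ u, u <:+: w → u.length < w.length → KNAdmissible n u

/-- The lowest unbarred letter `z` with `(z, z̄)` in `w` and `N(z) = z + 1`. -/
def badLetter (n : ℕ) (w : List ℕ) : ℕ :=
  (((List.range (n+1)).filter (fun z =>
      decide (1 ≤ z ∧ z ∈ w ∧ (2*n+1-z) ∈ w ∧ Ncount n z w = z+1)))).headD 0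

/-- `w̃`: the word obtained from `w` by erasing the pair `(z, z̄)`, `z = badLetter`. -/
def contract (n : ℕ) (w : List ℕ) : List ℕ :=
  w.filter (fun x => decide (x ≠ badLetter n w ∧ x ≠ 2*n+1 - badLetter n w))

/-! ### Crystal operators via the signature rule. -/

/-- The `i`-signature of `w`: `+` (true) for letters `i`, `(i+1)bar`; `−` (false)
for letters `i+1`, `ī`; each with its position in `w`. -/
def sigList (n i : ℕ) (w : List ℕ) : List (Bool × ℕ) :=
  (w.zipIdx.map Prod.swap).filterMap (fun p =>
    if p.2 = i ∨ p.2 = 2*n - i then some (true, p.1)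
    else if p.2 = i+1 ∨ p.2 = 2*n+1-i then some (false, p.1)
    else none)

/-- One step of the `+−` cancellation, using a stack. -/
def reduceStep (st : List (Bool × ℕ)) (it : Bool × ℕ) : List (Bool × ℕ) :=
  match st, it with
  | (true, _) :: rest, (false, _) => rest
  | _, _ => it :: st

/-- The reduced signature `ρ_i(w) = −^r +^s` (with positions). -/
def reducedSig (l : List (Bool × ℕ)) : List (Bool × ℕ) := (l.foldl reduceStep []).reverse

/-- Kashiwara operator `f̃_i` on words (`none` encodes `0`). -/
def fOp (n i : ℕ) (w : List ℕ) : Option (List ℕ) :=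
  match (reducedSig (sigList n i w)).find? (fun s => s.1) with
  | some s => some (w.set s.2 (if w.getD s.2 0 = i then i+1 else 2*n+1-i))
  | none => none

/-- Kashiwara operator `ẽ_i` on words (`none` encodes `0`). -/
def eOp (n i : ℕ) (w : List ℕ) : Option (List ℕ) :=
  match ((reducedSig (sigList n i w)).reverse.find? (fun s => !s.1)) with
  | some s => some (w.set s.2 (if w.getD s.2 0 = i+1 then i else 2*n - i))
  | none => none

/-- `ε_i(w)`. -/
def epsC (n i : ℕ) (w : List ℕ) : ℕ :=
  ((reducedSig (sigList n i w)).filter (fun s => !s.1)).length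

/-- `φ_i(w)`. -/
def phiC (n i : ℕ) (w : List ℕ) : ℕ :=
  ((reducedSig (sigList n i w)).filter (fun s => s.1)).length

/-- One crystal edge of some color `i ∈ {1,...,n}` (in either direction). -/
def CrystalStep (n : ℕ) (w w' : List ℕ) : Prop :=
  ∃ i, 1 ≤ i ∧ i ≤ n ∧ (fOp n i w = some w' ∨ eOp n i w = some w')

/-- Same connected component of the crystal graph `G_n`. -/
def SameComp (n : ℕ) : List ℕ → List ℕ → Prop := Relation.EqvGen (CrystalStep n)

/-- One crystal edge of color `i ∈ {1,...,n−1}` (the `U_q(sl_n)` structure). -/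
def CrystalStepA (n : ℕ) (w w' : List ℕ) : Prop :=
  ∃ i, 1 ≤ i ∧ i + 1 ≤ n ∧ (fOp n i w = some w' ∨ eOp n i w = some w')

/-- Same `U_q(sl_n)`-connected component (arrows of color `n` removed). -/
def SameCompA (n : ℕ) : List ℕ → List ℕ → Prop := Relation.EqvGen (CrystalStepA n)

/-- Highest weight vertex: `ẽ_i(w) = 0` for all `i = 1,...,n`. -/
def HighestWt (n : ℕ) (w : List ℕ) : Prop := ∀ i, 1 ≤ i → i ≤ n → eOp n i w = none

/-- The weight `d(w)`: `d_i = #(i in w) − #(ī in w)`. -/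
def wt (n : ℕ) (w : List ℕ) (i : ℕ) : ℤ := (w.count i : ℤ) - (w.count (2*n+1-i) : ℤ)

/-- Apply the sequence of operators `f̃_{i}` for `i ∈ l` successively. -/
def applyF (n : ℕ) (l : List ℕ) (w : List ℕ) : Option (List ℕ) :=
  l.foldl (fun ow i => ow.bind (fOp n i)) (some w)

/-- `w1 ∼ w2`: same place in two isomorphic connected components of `G_n`. -/
def SamePlace (n : ℕ) (w1 w2 : List ℕ) : Prop :=
  ∃ w10 w20 l, HighestWt n w10 ∧ HighestWt n w20 ∧
    (∀ i, 1 ≤ i → i ≤ n → wt n w10 i = wt n w20 i) ∧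
    (∀ i ∈ l, 1 ≤ i ∧ i ≤ n) ∧
    applyF n l w10 = some w1 ∧ applyF n l w20 = some w2

/-! ### The plactic relations. -/

/-- The relations `R1` and `R2` (on bare length-3 words). -/
inductive KnuthRel (n : ℕ) : List ℕ → List ℕ → Prop
  | R1a (x y z : ℕ) : 1 ≤ x → x ≤ y → y < z → z ≤ 2*n → z ≠ 2*n+1-x →
      KnuthRel n [y,z,x] [y,x,z]
  | R1b (x y z : ℕ) : 1 ≤ x → x < y → y ≤ z → z ≤ 2*n → z ≠ 2*n+1-x →
      KnuthRel n [x,z,y] [z,x,y]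
  | R2a (x y : ℕ) : 1 < x → x ≤ n → x ≤ y → y ≤ 2*n+1-x →
      KnuthRel n [y, 2*n+2-x, x-1] [y, x, 2*n+1-x]
  | R2b (x y : ℕ) : 1 < x → x ≤ n → x ≤ y → y ≤ 2*n+1-x →
      KnuthRel n [x, 2*n+1-x, y] [2*n+2-x, x-1, y]

/-- One rewriting step, in context, by `R1`, `R2` or the contraction `R3`. -/
inductive PlStep (n : ℕ) : List ℕ → List ℕ → Prop
  | knuth (u v w w' : List ℕ) : KnuthRel n w w' → PlStep n (u++w++v) (u++w'++v)
  | contr (u v w : List ℕ) : MinimalNonAdm n w → PlStep n (u++w++v) (u++(contract n w)++v)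

/-- The plactic congruence of `Pl(C_n)`. -/
def Plactic (n : ℕ) : List ℕ → List ℕ → Prop := Relation.EqvGen (PlStep n)

/-- One rewriting step in context using only `R1` and `R2`. -/
inductive Pl12Step (n : ℕ) : List ℕ → List ℕ → Prop
  | knuth (u v w w' : List ℕ) : KnuthRel n w w' → Pl12Step n (u++w++v) (u++w'++v)

/-- The congruence generated by `R1` and `R2` only. -/
def Plactic12 (n : ℕ) : List ℕ → List ℕ → Prop := Relation.EqvGen (Pl12Step n)

/-- Relation on `Option`s: `none ↔ none`, `some ↔ some` related values. -/
def OptRel (r : List ℕ → List ℕ → Prop) : Option (List ℕ) → Option (List ℕ) → Prop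
  | none, none => True
  | some a, some b => r a b
  | _, _ => False

/-! ### Symplectic tableaux. -/

/-- `C ≤ D` for columns with `h(C) ≥ h(D)`: rows of `CD` weakly increasing. -/
def ColLe (C D : List ℕ) : Prop :=
  D.length ≤ C.length ∧ ∀ k < D.length, C.getD k 0 ≤ D.getD k 0

/-- A symplectic tableau: a list of admissible columns, left to right, with
`rC_i ≤ lC_{i+1}` (Sheats' description of the KN conditions). -/
def IsSympTab (n : ℕ) (T : List (List ℕ)) : Prop :=
  (∀ C ∈ T, IsColumn n C ∧ KNAdmissible n C) ∧
  T.Chain' (fun C D => ColLe (rC n C) (lC n D))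

/-- The reading of a tableau: columns from right to left, top to bottom. -/
def reading (T : List (List ℕ)) : List ℕ := T.reverse.foldr (· ++ ·) []

/-- Number of boxes in row `k` (0-based) of the shape of `T`. -/
def rowLenF (T : List (List ℕ)) (k : ℕ) : ℕ :=
  (T.filter (fun C => decide (k < C.length))).length

/-- `g` is obtained from `f` by adding exactly one box (in some row). -/
def AddOneBox (f g : ℕ → ℕ) : Prop := ∃ j, g j = f j + 1 ∧ ∀ k, k ≠ j → g k = f k

/-- Two diagrams differ by exactly one box. -/
def DiffOneBox (f g : ℕ → ℕ) : Prop := AddOneBox f g ∨ AddOneBox g f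

/-- An `n`-oscillating tableau of length `l` (diagrams as row-length functions,
normalized to `0` outside `{1,...,l}`). -/
def IsOscTab (n l : ℕ) (Q : ℕ → ℕ → ℕ) : Prop :=
  (∀ k, Q 0 k = 0) ∧ (∀ i, l < i → ∀ k, Q i k = 0) ∧
  (∀ i < l, DiffOneBox (Q i) (Q (i+1))) ∧
  (∀ i k, Q i (k+1) ≤ Q i k) ∧
  (∀ i k, n ≤ k → Q i k = 0)

/-! For `m ≤ n` every letter `k ≤ m` contributes `[k ∈ C] + [k̄ ∈ C]` to `N(m)`, and this equals
`1 + [k paired] - [k free]`. So `N(m) ≤ m` says exactly that at most as many paired letters as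
free letters are `≤ m`. A splitting set pairs each `z_i` with a smaller free letter `t_i`, the
`t_i` distinct, which gives these inequalities. Conversely, under them the greedy choice never
fails: if at least `r - i + 1` free letters lie below the `i`-th bound, then at least `r - i` lie
below `t_i`, and at least `r - i` lie below `z_{i+1}` because `z_{i+1} > ... > z_r` are paired. -/

section Counting

variable {P : ℕ → Prop} [DecidablePred P] {L : List ℕ} {b : ℕ}

lemma countP_lt_le_count (hL : L.Nodup) (h : ∀ x ∈ L, x < b → P x) :
    L.countP (· < b) ≤ Nat.count P b := by
  rw [Nat.count_eq_card_filter_range, List.countP_eq_length_filter,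
    ← List.toFinset_card_of_nodup (hL.filter _)]
  refine Finset.card_le_card fun x hx => ?_
  simp only [List.mem_toFinset, List.mem_filter, decide_eq_true_eq] at hx
  simpa using ⟨hx.2, h x hx.1 hx.2⟩

lemma count_le_countP_lt (h : ∀ x < b, P x → x ∈ L) :
    Nat.count P b ≤ L.countP (· < b) := by
  rw [Nat.count_eq_card_filter_range, List.countP_eq_length_filter]
  refine (Finset.card_le_card fun x hx => ?_).trans (List.toFinset_card_le _)
  simp only [Finset.mem_filter, Finset.mem_range] at hx
  simpa using ⟨h x hx.1 hx.2, hx.1⟩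

lemma List.Forall₂.countP_le {R : ℕ → ℕ → Prop} {p : ℕ → Bool} {l₁ l₂ : List ℕ}
    (h : List.Forall₂ R l₁ l₂) (hp : ∀ a b, R a b → p a → p b) :
    l₁.countP p ≤ l₂.countP p := by
  induction h with
  | nil => rfl
  | cons hab _ ih =>
    simp only [List.countP_cons]
    have := hp _ _ hab
    split_ifs <;> simp_all; omega

lemma count_eq_count_add_one_of_isGreatest {t : ℕ} (h : IsGreatest {s | P s ∧ s < b} t) :
    Nat.count P b = Nat.count P t + 1 := by
  rw [← Nat.count_succ_eq_succ_count_iff.mpr h.1.1, Nat.count_eq_card_filter_range,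
    Nat.count_eq_card_filter_range]
  congr 1
  ext s
  have := @h.2 s
  simp only [Finset.mem_filter, Finset.mem_range]
  constructor
  · exact fun hs => ⟨Nat.lt_succ_of_le (this ⟨hs.2, hs.1⟩), hs.2⟩
  · exact fun hs => ⟨by have := h.1.2; omega, hs.2⟩

lemma isGreatest_findGreatest (h : 0 < Nat.count P b) :
    IsGreatest {s | P s ∧ s < b} (Nat.findGreatest P (b - 1)) := by
  obtain ⟨k, hkb, hk⟩ := Nat.count_ne_iff_exists.mp h.ne'
  refine ⟨⟨Nat.findGreatest_spec (by omega) hk, ?_⟩, fun s hs => ?_⟩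
  · have := Nat.findGreatest_le (P := P) (b - 1); omega
  · exact Nat.le_findGreatest (by have := hs.2; omega) hs.1

end Counting

lemma List.Pairwise.length_sub_le_countP {l : List ℕ} (hl : l.Pairwise (· ≥ ·)) {i : ℕ}
    (hi : i < l.length) : l.length - i ≤ l.countP (· ≤ l[i]) := by
  have hdrop := hl.drop (i := i)
  rw [List.drop_eq_getElem_cons hi, List.pairwise_cons] at hdrop
  have hle : ∀ x ∈ l.drop i, x ≤ l[i] := by
    rw [List.drop_eq_getElem_cons hi]
    exact List.forall_mem_cons.mpr ⟨le_rfl, hdrop.1⟩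
  calc l.length - i = (l.drop i).countP (· ≤ l[i]) := by
        rw [List.countP_eq_length.mpr (by simpa using hle), List.length_drop]
    _ ≤ l.countP (· ≤ l[i]) := (List.drop_sublist i l).countP_le

section Greedy

variable (P : ℕ → Prop) [DecidablePred P] (z : ℕ → ℕ)

def greedyBound (t : ℕ → ℕ) (i : ℕ) : ℕ := if i = 0 then z 0 else min (t (i-1)) (z i)

def greedySeq : ℕ → ℕ
  | 0 => Nat.findGreatest P (z 0 - 1)
  | i+1 => Nat.findGreatest P (min (greedySeq i) (z (i+1)) - 1)

lemma greedySeq_eq_findGreatest (i : ℕ) :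
    greedySeq P z i = Nat.findGreatest P (greedyBound z (greedySeq P z) i - 1) := by
  cases i <;> rfl

lemma greedyBound_le (t : ℕ → ℕ) (i : ℕ) : greedyBound z t i ≤ z i := by
  unfold greedyBound
  split_ifs with h
  · rw [h]
  · exact min_le_right _ _

lemma greedyBound_succ_le (t : ℕ → ℕ) (i : ℕ) : greedyBound z t (i+1) ≤ t i :=
  min_le_left _ _

variable {P z} {r : ℕ}

lemma sub_le_count_greedyBound (hz : ∀ i < r, r - i ≤ Nat.count P (z i)) :
    ∀ i < r, r - i ≤ Nat.count P (greedyBound z (greedySeq P z) i) := by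
  intro i
  induction i with
  | zero => exact hz 0
  | succ i ih =>
    intro hi
    have hgreatest := greedySeq_eq_findGreatest P z i ▸
      isGreatest_findGreatest (by have := ih (by omega); omega)
    have hcount := count_eq_count_add_one_of_isGreatest hgreatest
    rw [greedyBound, if_neg (Nat.succ_ne_zero i), Nat.add_sub_cancel,
      Nat.count_monotone P |>.map_min]
    exact le_min (by have := ih (by omega); omega) (hz _ hi)

lemma isGreatest_greedySeq (hz : ∀ i < r, r - i ≤ Nat.count P (z i)) {i : ℕ} (hi : i < r) :
    IsGreatest {s | P s ∧ s < greedyBound z (greedySeq P z) i} (greedySeq P z i) :=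
  greedySeq_eq_findGreatest P z i ▸
    isGreatest_findGreatest (by have := sub_le_count_greedyBound hz i hi; omega)

end Greedy

section Letters

variable (n : ℕ) (C : List ℕ)

def IsFreeLetter (t : ℕ) : Prop := 1 ≤ t ∧ t ∉ C ∧ 2*n+1-t ∉ C

def IsPairedLetter (z : ℕ) : Prop := 1 ≤ z ∧ z ∈ C ∧ 2*n+1-z ∈ C

instance : DecidablePred (IsFreeLetter n C) := fun _ => by unfold IsFreeLetter; infer_instance

instance : DecidablePred (IsPairedLetter n C) := fun _ => by unfold IsPairedLetter; infer_instance

end Letters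

lemma ncount_zero {n : ℕ} {C : List ℕ} (hC : IsColumn n C) : Ncount n 0 C = 0 := by
  rw [Ncount, List.length_eq_zero_iff, List.filter_eq_nil_iff]
  intro x hx
  have := hC.2 x hx
  simp only [decide_eq_true_eq]
  omega

lemma ncount_succ {n m : ℕ} (C : List ℕ) (hm : m < n) :
    Ncount n (m+1) C = Ncount n m C + C.count (m+1) + C.count (2*n-m) := by
  induction C with
  | nil => rfl
  | cons x C ih =>
    simp only [Ncount, ← List.countP_eq_length_filter, List.countP_cons, List.count_cons,
      beq_iff_eq, decide_eq_true_eq] at ih ⊢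
    split_ifs <;> omega

lemma ncount_add_count_isFreeLetter {n : ℕ} {C : List ℕ} (hC : IsColumn n C) {m : ℕ}
    (hm : m ≤ n) :
    Ncount n m C + Nat.count (IsFreeLetter n C) (m+1) =
      m + Nat.count (IsPairedLetter n C) (m+1) := by
  induction m with
  | zero => simp [ncount_zero hC, Nat.count_one, IsFreeLetter, IsPairedLetter]
  | succ m ih =>
    have hnd : C.Nodup := (List.isChain_iff_pairwise.mp hC.1).imp Nat.ne_of_lt
    have e : 2*n - m = 2*n+1-(m+1) := by omega
    rw [ncount_succ C (by omega), Nat.count_succ _ (m+1), Nat.count_succ _ (m+1),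
      hnd.count, hnd.count, e]
    have := ih (by omega)
    by_cases h1 : m + 1 ∈ C <;> by_cases h2 : 2*n+1-(m+1) ∈ C <;>
      simp only [IsFreeLetter, IsPairedLetter, h1, h2] <;> simp <;> omega

lemma knAdmissible_iff_count_le {n : ℕ} {C : List ℕ} (hC : IsColumn n C) :
    KNAdmissible n C ↔ ∀ m, 1 ≤ m → m ≤ n →
      Nat.count (IsPairedLetter n C) (m+1) ≤ Nat.count (IsFreeLetter n C) (m+1) := by
  refine forall₃_congr fun m _ hm => ?_
  have := ncount_add_count_isFreeLetter hC hm
  omega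

section Splitting

variable {n : ℕ} {C J : List ℕ}

lemma mem_dupList {z : ℕ} : z ∈ dupList n C ↔ IsPairedLetter n C z ∧ z ≤ n := by
  simp only [dupList, IsPairedLetter, List.mem_reverse, List.mem_filter, List.mem_range,
    decide_eq_true_eq, Nat.lt_succ_iff]
  tauto

lemma dupList_pairwise : (dupList n C).Pairwise (· > ·) :=
  List.pairwise_reverse.mpr (List.pairwise_lt_range.sublist List.filter_sublist)

lemma isSplittingSet_iff : IsSplittingSet n C J ↔ J.length = (dupList n C).length ∧
    ∀ i < J.length, IsGreatest {s | IsFreeLetter n C s ∧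
      s < greedyBound (fun i => (dupList n C).getD i 0) (fun i => J.getD i 0) i} (J.getD i 0) := by
  have hfree : ∀ b t, FreeLt n C b t ↔ IsFreeLetter n C t ∧ t < b := by
    simp only [FreeLt, IsFreeLetter]; tauto
  simp only [IsSplittingSet, hfree, IsGreatest, upperBounds, greedyBound, Set.mem_ofPred_eq]

lemma count_paired_le_count_free_of_isSplittingSet (hJ : IsSplittingSet n C J) {m : ℕ}
    (hm : m ≤ n) :
    Nat.count (IsPairedLetter n C) (m+1) ≤ Nat.count (IsFreeLetter n C) (m+1) := by
  obtain ⟨hlen, hgreatest⟩ := isSplittingSet_iff.mp hJ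
  have hbelow : List.Forall₂ (fun z t => t < z) (dupList n C) J := by
    refine List.forall₂_iff_get.mpr ⟨hlen.symm, fun i hI hJi => ?_⟩
    have hlt := (hgreatest i hJi).1.2
    have hle := greedyBound_le (fun i => (dupList n C).getD i 0) (fun i => J.getD i 0) i
    rw [List.getD_eq_getElem _ _ hJi] at hlt
    rw [List.getD_eq_getElem _ _ hI] at hle
    exact hlt.trans_le hle
  have hanti : J.Pairwise (· > ·) := by
    refine List.IsChain.pairwise (List.isChain_iff_getElem.mpr fun i hi => ?_)
    have hlt := (hgreatest (i+1) hi).1.2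
    have hle := greedyBound_succ_le (fun i => (dupList n C).getD i 0) (fun i => J.getD i 0) i
    rw [List.getD_eq_getElem _ _ hi] at hlt
    rw [List.getD_eq_getElem _ _ (by omega)] at hle
    exact hlt.trans_le hle
  have hfree : ∀ x ∈ J, IsFreeLetter n C x := by
    intro x hx
    obtain ⟨i, hi, rfl⟩ := List.getElem_of_mem hx
    exact List.getD_eq_getElem J 0 hi ▸ (hgreatest i hi).1.1
  calc Nat.count (IsPairedLetter n C) (m+1)
      ≤ (dupList n C).countP (· < m+1) :=
        count_le_countP_lt fun x hx hp => mem_dupList.mpr ⟨hp, by omega⟩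
    _ ≤ J.countP (· < m+1) := hbelow.countP_le fun a b hab ha => by simp at ha ⊢; omega
    _ ≤ Nat.count (IsFreeLetter n C) (m+1) :=
        countP_lt_le_count hanti.nodup fun x hx _ => hfree x hx

lemma canSplit_of_forall_count_le
    (h : ∀ m, 1 ≤ m → m ≤ n →
      Nat.count (IsPairedLetter n C) (m+1) ≤ Nat.count (IsFreeLetter n C) (m+1)) :
    CanSplit n C := by
  set I := dupList n C
  set z := fun i => I.getD i 0
  set t := greedySeq (IsFreeLetter n C) z
  have hz : ∀ i < I.length, I.length - i ≤ Nat.count (IsFreeLetter n C) (z i) := by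
    intro i hi
    have hzi : z i = I[i] := List.getD_eq_getElem _ _ hi
    obtain ⟨hpaired, hzn⟩ := mem_dupList.mp (hzi ▸ List.getElem_mem hi)
    have hnotfree : ¬ IsFreeLetter n C (z i) := fun hf => hf.2.1 hpaired.2.1
    calc I.length - i ≤ I.countP (· ≤ I[i]) :=
          (dupList_pairwise.imp le_of_lt).length_sub_le_countP hi
      _ ≤ Nat.count (IsPairedLetter n C) (z i + 1) := by
          rw [hzi]
          simpa only [Nat.lt_succ_iff] using countP_lt_le_count (b := I[i] + 1)
            dupList_pairwise.nodup fun x hx _ => (mem_dupList.mp hx).1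
      _ ≤ Nat.count (IsFreeLetter n C) (z i + 1) := h _ hpaired.1 hzn
      _ = Nat.count (IsFreeLetter n C) (z i) := by
          rw [Nat.count_succ, if_neg hnotfree, add_zero]
  have ht : ∀ i < I.length, ((List.range I.length).map t).getD i 0 = t i := by
    intro i hi
    simp [hi]
  refine ⟨(List.range I.length).map t, isSplittingSet_iff.mpr ⟨by simp [I], fun i hi => ?_⟩⟩
  rw [List.length_map, List.length_range] at hi
  have hbound : greedyBound z (fun j => ((List.range I.length).map t).getD j 0) i =
      greedyBound z t i := by
    unfold greedyBound
    split_ifs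
    · rfl
    · beta_reduce
      rw [ht _ (by omega)]
  rw [ht i hi, hbound]
  exact isGreatest_greedySeq hz hi

end Splitting

theorem stmt3_general (n : ℕ) (C : List ℕ) (hC : IsColumn n C) :
    KNAdmissible n C ↔ CanSplit n C := by
  rw [knAdmissible_iff_count_le hC]
  exact ⟨canSplit_of_forall_count_le,
    fun ⟨_, hJ⟩ m _ hm => count_paired_le_count_free_of_isSplittingSet hJ hm⟩

/-- Sheats: a column is KN-admissible iff it can be split. -/
theorem stmt3 (n : ℕ) (hn : 1 ≤ n) (C : List ℕ) (hC : IsColumn n C) :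
    KNAdmissible n C ↔ CanSplit n C :=
  stmt3_general n C hC
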